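/- arXiv:1507.04176 — 2 statements merged into one kernel-verified Lean document; each statement's English description precedes it below -/
import Mathlib

section
/- Let n ≥ 1, k ∈ ℂ with k ≠ 1 and k·m + n ≠ 0. Define U = (2/(n+m))·J_{n+m} − I_{n+m} with block decomposition U₁ (n×n), U₂ (n×m), U₃ (m×n), U₄ (m×m), and suppose (1−k)U₄ − (1+k)I_m is invertible. Then Ũ(k) := U₁ − (1−k)·U₂·((1−k)U₄ − (1+k)I_m)⁻¹·U₃ equals (2/(k·m+n))·J_n − I_n. -/
open Matrix

set_option maxHeartbeats 1000000

theorem effective_coupling_standard (n m : ℕ) (hn : 1 ≤ n) (k : ℂ)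
    (hk : k ≠ 1) (hkmn : k * m + n ≠ 0)
    (U : Matrix (Fin n ⊕ Fin m) (Fin n ⊕ Fin m) ℂ)
    (hU : U = (2 / ((n : ℂ) + m)) • (Matrix.of fun _ _ => (1 : ℂ)) - 1)
    (hinv : IsUnit ((1 - k) • U.toBlocks₂₂ - (1 + k) • (1 : Matrix (Fin m) (Fin m) ℂ))) :
    U.toBlocks₁₁ -
        (1 - k) • (U.toBlocks₁₂ *
          ((1 - k) • U.toBlocks₂₂ - (1 + k) • (1 : Matrix (Fin m) (Fin m) ℂ))⁻¹ *
          U.toBlocks₂₁) =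
      (2 / (k * m + n)) • (Matrix.of fun _ _ => (1 : ℂ) : Matrix (Fin n) (Fin n) ℂ) - 1 := by
  have hnm : ((n:ℂ) + m) ≠ 0 := by
    have h1 : ((n:ℂ) + m) = ((n + m : ℕ) : ℂ) := by push_cast; ring
    rw [h1]
    exact Nat.cast_ne_zero.mpr (by omega)
  set c : ℂ := 2 / ((n:ℂ)+m) with hc
  set α : ℂ := (1 - k) * c with hα
  have hkey : α * m - 2 = -2 * (k*(m:ℂ)+n) / ((n:ℂ)+m) := by
    rw [hα, hc]; field_simp; ring
  have hαm : α * (m:ℂ) - 2 ≠ 0 := by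
    rw [hkey]
    exact div_ne_zero (by simpa using hkmn) hnm
  set δ : ℂ := α / (2*(α*(m:ℂ)-2)) with hδ
  set W : Matrix (Fin m) (Fin m) ℂ :=
    (-(1/2) : ℂ) • 1 + δ • (Matrix.of fun _ _ => (1:ℂ)) with hW
  clear_value c α δ W
  have hU22 : U.toBlocks₂₂ = c • (Matrix.of fun _ _ => (1:ℂ)) - 1 := by
    subst hU; ext i j
    by_cases h : i = j <;>
      simp [Matrix.toBlocks₂₂, Matrix.one_apply, h]
  have hN : (1 - k) • U.toBlocks₂₂ - (1 + k) • (1 : Matrix (Fin m) (Fin m) ℂ)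
      = α • (Matrix.of fun _ _ => (1:ℂ)) - (2:ℂ) • 1 := by
    rw [hU22, hα]; module
  have hNW : ((1 - k) • U.toBlocks₂₂ - (1 + k) • (1 : Matrix (Fin m) (Fin m) ℂ)) * W = 1 := by
    rw [hN, hW]
    ext i j
    by_cases h : i = j <;>
      simp [Matrix.mul_apply, Matrix.one_apply, h, Finset.sum_add_distrib,
        Finset.sum_ite_eq, Finset.mul_sum, mul_add, sub_mul] <;>
    · rw [hδ]; field_simp; ring
  have hinvW : ((1 - k) • U.toBlocks₂₂ - (1 + k) • (1 : Matrix (Fin m) (Fin m) ℂ))⁻¹ = W :=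
    Matrix.inv_eq_right_inv hNW
  rw [hinvW]
  have hU11 : U.toBlocks₁₁ = c • (Matrix.of fun _ _ => (1:ℂ)) - 1 := by
    subst hU; ext i j
    by_cases h : i = j <;>
      simp [Matrix.toBlocks₁₁, Matrix.one_apply, h]
  have hU12 : U.toBlocks₁₂ = c • (Matrix.of fun _ _ => (1:ℂ)) := by
    subst hU; ext i j
    simp [Matrix.toBlocks₁₂, Matrix.one_apply]
  have hU21 : U.toBlocks₂₁ = c • (Matrix.of fun _ _ => (1:ℂ)) := by
    subst hU; ext i j
    simp [Matrix.toBlocks₂₁, Matrix.one_apply]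
  have hJW : (Matrix.of fun _ _ => (1:ℂ) : Matrix (Fin n) (Fin m) ℂ) * W
      = (-(1/2) + (m:ℂ)*δ) • (Matrix.of fun _ _ => (1:ℂ)) := by
    rw [hW]
    ext i j
    simp [Matrix.mul_apply, Matrix.one_apply, Finset.sum_add_distrib, mul_add]
  have hJJ : (Matrix.of fun _ _ => (1:ℂ) : Matrix (Fin n) (Fin m) ℂ)
      * (Matrix.of fun _ _ => (1:ℂ) : Matrix (Fin m) (Fin n) ℂ)
      = (m:ℂ) • (Matrix.of fun _ _ => (1:ℂ)) := by
    ext i j; simp [Matrix.mul_apply]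
  rw [hU11, hU12, hU21, Matrix.smul_mul, Matrix.smul_mul, hJW, Matrix.smul_mul,
    Matrix.mul_smul, hJJ]
  have h2D : (2:ℂ)*(α*(m:ℂ)-2) ≠ 0 := mul_ne_zero two_ne_zero hαm
  have e1 : c * ((n:ℂ)+m) = 2 := by rw [hc]; exact div_mul_cancel₀ _ hnm
  have e3 : δ * (2*(α*(m:ℂ)-2)) = α := by rw [hδ]; exact div_mul_cancel₀ _ h2D
  have e4 : (α*(m:ℂ)-2) * ((n:ℂ)+m) = -2*(k*(m:ℂ)+n) := by
    rw [hkey]; exact div_mul_cancel₀ _ hnm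
  have e2 : 2*δ*(k*(m:ℂ)+n) = -(1-k) := by
    linear_combination δ * e4 + (-((n:ℂ)+m)/2) * e3 + (-((n:ℂ)+m)/2) * hα +
      (-(1-k)/2) * e1
  have hscal : c - (1-k) * (c * ((-(1/2) + (m:ℂ)*δ) * (c * (m:ℂ)))) = 2/(k*(m:ℂ)+n) := by
    rw [eq_div_iff hkmn]
    linear_combination ((1-k)*c*(m:ℂ)/2 + 1) * e1 + (-(1-k)*c^2*(m:ℂ)^2/2) * e2
  ext i j
  by_cases h : i = j <;>
    simp [Matrix.one_apply, h, smul_smul] <;>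
  · rw [← hscal]; ring
end

section
/- Let M be the 12×12 complex matrix indexed by the directed bonds of the complete graph K₄ (two opposite orientations for each of the 6 edges), whose entry in row b' and column b equals 1/3 if b' follows b (head of b is tail of b') and b' is not the reversal of b, equals −2/3 if b' is the reversal of b, and 0 otherwise. Then the characteristic polynomial of M is (x+1)²·(x−1)³·(x+1/3)³·x⁴; in particular M has eigenvalues −1, 1, −1/3, 0 with algebraic multiplicities 2, 3, 3, 4. -/
open Matrix Polynomial

/-- Directed bonds of the complete graph `K₄`: ordered pairs of distinct vertices. -/
def Bond : Type := {p : Fin 4 × Fin 4 // p.1 ≠ p.2}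

instance : Fintype Bond := by unfold Bond; infer_instance
instance : DecidableEq Bond := by unfold Bond; infer_instance

/-- Reversal of a directed bond. -/
def Bond.rev (b : Bond) : Bond := ⟨(b.1.2, b.1.1), fun h => b.2 h.symm⟩

/-- The bond scattering matrix `QΣ̃` of the equilateral complete quantum graph on four
vertices with three halflines at each vertex and standard coupling. -/
noncomputable def K4BondMatrix : Matrix Bond Bond ℂ := Matrix.of fun b' b =>
  if b.1.2 = b'.1.1 then (if b' = b.rev then -2/3 else 1/3) else 0

/-! ### Auxiliary material -/

/-- Integer version (3 times the bond matrix). -/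
def MBz : Matrix Bond Bond ℤ := Matrix.of fun b' b =>
  if b.1.2 = b'.1.1 then (if b' = b.rev then -2 else 1) else 0

def bondToFin (b : Bond) : Fin 12 :=
  ⟨3 * b.1.1.val + (if b.1.2.val < b.1.1.val then b.1.2.val else b.1.2.val - 1), by
    have h1 := b.1.1.isLt; have h2 := b.1.2.isLt; split <;> omega⟩

def finToBond : Fin 12 → Bond :=
  ![⟨(0,1), by decide⟩, ⟨(0,2), by decide⟩, ⟨(0,3), by decide⟩,
    ⟨(1,0), by decide⟩, ⟨(1,2), by decide⟩, ⟨(1,3), by decide⟩,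
    ⟨(2,0), by decide⟩, ⟨(2,1), by decide⟩, ⟨(2,3), by decide⟩,
    ⟨(3,0), by decide⟩, ⟨(3,1), by decide⟩, ⟨(3,2), by decide⟩]

def bondEquiv : Bond ≃ Fin 12 :=
  ⟨bondToFin, finToBond, by decide, by decide⟩

def Mz : Matrix (Fin 12) (Fin 12) ℤ :=
  !![0, 0, 0, -2, 0, 0, 1, 0, 0, 1, 0, 0;
     0, 0, 0, 1, 0, 0, -2, 0, 0, 1, 0, 0;
     0, 0, 0, 1, 0, 0, 1, 0, 0, -2, 0, 0;
     -2, 0, 0, 0, 0, 0, 0, 1, 0, 0, 1, 0;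
     1, 0, 0, 0, 0, 0, 0, -2, 0, 0, 1, 0;
     1, 0, 0, 0, 0, 0, 0, 1, 0, 0, -2, 0;
     0, -2, 0, 0, 1, 0, 0, 0, 0, 0, 0, 1;
     0, 1, 0, 0, -2, 0, 0, 0, 0, 0, 0, 1;
     0, 1, 0, 0, 1, 0, 0, 0, 0, 0, 0, -2;
     0, 0, -2, 0, 0, 1, 0, 0, 1, 0, 0, 0;
     0, 0, 1, 0, 0, -2, 0, 0, 1, 0, 0, 0;
     0, 0, 1, 0, 0, 1, 0, 0, -2, 0, 0, 0]

def Pz : Matrix (Fin 12) (Fin 12) ℤ :=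
  !![0, 1, -1, -1, 0, -1, 2, -1, 0, 0, 1, 0;
     1, 0, 1, 0, -1, -1, -1, 5, 0, 0, 0, 1;
     -1, -1, 0, 1, 1, 2, -1, -4, 1, 0, 0, 0;
     0, 1, 1, 1, 0, -1, -2, -5, 0, 1, 0, 0;
     -1, -1, -1, 0, 0, -1, 1, 7, 0, 0, 0, 1;
     1, 0, 0, -1, 0, 2, 1, -2, 1, 0, 0, 0;
     1, 0, -1, 0, 1, -1, -3, -3, 0, 1, 0, 0;
     -1, -1, 1, 0, 0, -1, 3, 3, 0, 0, 1, 0;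
     0, 1, 0, 0, -1, 2, 0, 0, 1, 0, 0, 0;
     -1, -1, 0, -1, -1, 0, -3, -6, 0, 1, 0, 0;
     1, 0, 0, 1, 0, 0, 3, 0, 0, 0, 1, 0;
     0, 1, 0, 0, 1, 0, 0, 6, 0, 0, 0, 1]

def Qz : Matrix (Fin 12) (Fin 12) ℤ :=
  !![-4, 8, -4, -4, -4, 8, 8, -4, -4, -4, 8, -4;
     8, -4, -4, 8, -4, -4, -4, -4, 8, -4, -4, 8;
     -6, 6, 0, 6, -12, 6, -6, 12, -6, 0, -6, 6;
     -6, 0, 6, 6, 6, -12, 0, -6, 6, -6, 12, -6;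
     0, -6, 6, 0, -6, 6, 6, 6, -12, -6, -6, 12;
     -12, -9, -3, -12, -9, -3, -3, -3, 6, 15, 15, 18;
     -2, -8, -6, 10, 10, 12, -8, -2, -6, -2, 4, -2;
     -4, -1, -3, -4, -1, -3, 5, 5, 6, -1, -1, 2;
     16, 16, 16, 16, 16, 16, 16, 16, 16, -32, -32, -32;
     -32, -32, -32, 16, 16, 16, 16, 16, 16, 16, 16, 16;
     16, 16, 16, -32, -32, -32, 16, 16, 16, 16, 16, 16;
     16, 16, 16, 16, 16, 16, -32, -32, -32, 16, 16, 16]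

def dz : Fin 12 → ℤ := ![-3, -3, 3, 3, 3, -1, -1, -1, 0, 0, 0, 0]

noncomputable def dq : Fin 12 → ℚ := fun i => ((dz i : ℚ)) / 3

noncomputable def Mq : Matrix (Fin 12) (Fin 12) ℚ := (3 : ℚ)⁻¹ • Mz.map (Int.cast)
noncomputable def Pq : Matrix (Fin 12) (Fin 12) ℚ := Pz.map (Int.cast)
noncomputable def Qq : Matrix (Fin 12) (Fin 12) ℚ := (48 : ℚ)⁻¹ • Qz.map (Int.cast)
noncomputable def MBondq : Matrix Bond Bond ℚ := (3 : ℚ)⁻¹ • MBz.map (Int.cast)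

lemma map_int_mul (A B : Matrix (Fin 12) (Fin 12) ℤ) :
    (A * B).map ((Int.cast : ℤ → ℚ)) = A.map (Int.cast) * B.map (Int.cast) := by
  have := Matrix.map_mul (L := A) (M := B) (f := Int.castRingHom ℚ)
  simpa using this

lemma hPQq : Pq * Qq = 1 := by
  have hPQ : Pz * Qz = Matrix.diagonal (fun _ => (48 : ℤ)) := by decide
  rw [Pq, Qq, Matrix.mul_smul, ← map_int_mul, hPQ,
    Matrix.diagonal_map (by simp : ((0 : ℤ) : ℚ) = 0)]
  ext i j
  by_cases h : i = j <;> simp [h, Matrix.diagonal_apply, Matrix.one_apply]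

lemma hMPq : Mq * Pq = Pq * Matrix.diagonal dq := by
  have hMP : Mz * Pz = Pz * Matrix.diagonal dz := by decide
  have hd : (3 : ℚ)⁻¹ • Matrix.diagonal (fun i => ((dz i : ℚ))) = Matrix.diagonal dq := by
    ext i j
    by_cases h : i = j
    · subst h
      simp [dq, Matrix.diagonal_apply_eq]
      ring
    · simp [Matrix.diagonal_apply_ne _ h]
  rw [Mq, Pq, Matrix.smul_mul, ← map_int_mul, hMP, map_int_mul,
    Matrix.diagonal_map (by simp : ((0 : ℤ) : ℚ) = 0)]
  rw [← hd, Matrix.mul_smul]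

lemma hMfac : Mq = Pq * Matrix.diagonal dq * Qq := by
  calc Mq = Mq * (Pq * Qq) := by rw [hPQq, mul_one]
    _ = (Mq * Pq) * Qq := by rw [mul_assoc]
    _ = Pq * Matrix.diagonal dq * Qq := by rw [hMPq]

/-- Characteristic polynomial is invariant under (one-sided verified) conjugation. -/
lemma charpoly_conj_aux {n R : Type*} [CommRing R] [Fintype n] [DecidableEq n]
    (P D Q : Matrix n n R) (h1 : P * Q = 1) :
    (P * D * Q).charpoly = D.charpoly := by
  have hPQ : (C : R →+* R[X]).mapMatrix P * (C : R →+* R[X]).mapMatrix Q = 1 := by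
    rw [← _root_.map_mul, h1, _root_.map_one]
  have key : charmatrix (P * D * Q) =
      (C : R →+* R[X]).mapMatrix P * charmatrix D * (C : R →+* R[X]).mapMatrix Q := by
    rw [charmatrix, charmatrix, mul_sub, sub_mul]
    congr 1
    · have hc : Commute (Matrix.scalar n (X : R[X])) ((C : R →+* R[X]).mapMatrix P) :=
        Matrix.scalar_commute _ (fun r' => Commute.all _ _) _
      calc Matrix.scalar n (X : R[X])
          = Matrix.scalar n (X : R[X]) *
            ((C : R →+* R[X]).mapMatrix P * (C : R →+* R[X]).mapMatrix Q) := by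
            rw [hPQ, mul_one]
        _ = (C : R →+* R[X]).mapMatrix P * Matrix.scalar n (X : R[X]) *
            (C : R →+* R[X]).mapMatrix Q := by
            rw [← mul_assoc, hc.eq]
    · rw [_root_.map_mul, _root_.map_mul]
  have hdet : ((C : R →+* R[X]).mapMatrix P).det * ((C : R →+* R[X]).mapMatrix Q).det = 1 := by
    rw [← det_mul, hPQ, det_one]
  rw [Matrix.charpoly, key, det_mul, det_mul, Matrix.charpoly]
  calc ((C : R →+* R[X]).mapMatrix P).det * (charmatrix D).det *
        ((C : R →+* R[X]).mapMatrix Q).det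
      = (charmatrix D).det * (((C : R →+* R[X]).mapMatrix P).det *
        ((C : R →+* R[X]).mapMatrix Q).det) := by ring
    _ = (charmatrix D).det := by rw [hdet, mul_one]

lemma Mq_charpoly : Mq.charpoly =
    (X + 1) ^ 2 * (X - 1) ^ 3 * (X + C (1/3 : ℚ)) ^ 3 * X ^ 4 := by
  rw [hMfac, charpoly_conj_aux _ _ _ hPQq,
    charpoly_of_upperTriangular _ (Matrix.blockTriangular_diagonal dq)]
  simp only [Matrix.diagonal_apply_eq]
  rw [Fin.prod_univ_succ, Fin.prod_univ_succ, Fin.prod_univ_succ, Fin.prod_univ_succ,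
    Fin.prod_univ_succ, Fin.prod_univ_succ, Fin.prod_univ_succ, Fin.prod_univ_succ,
    Fin.prod_univ_succ, Fin.prod_univ_succ, Fin.prod_univ_succ, Fin.prod_univ_one]
  have g1 : (((-3 : ℤ) : ℚ)) / 3 = -1 := by norm_num
  have g2 : (((3 : ℤ) : ℚ)) / 3 = 1 := by norm_num
  have g3 : (((-1 : ℤ) : ℚ)) / 3 = -(1/3) := by norm_num
  have g0 : (((0 : ℤ) : ℚ)) / 3 = 0 := by norm_num
  simp only [dq, dz, Matrix.cons_val_zero, Matrix.cons_val_succ, Fin.succ_zero_eq_one,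
    Matrix.cons_val_one, Matrix.head_cons, g1, g2, g3, g0,
    _root_.map_neg, _root_.map_one, _root_.map_zero]
  ring

lemma K4_eq_map : K4BondMatrix = MBondq.map (Rat.castHom ℂ) := by
  ext b' b
  simp only [K4BondMatrix, MBondq, MBz, Matrix.map_apply, Matrix.of_apply, Matrix.smul_apply]
  split_ifs <;> push_cast <;> norm_num

set_option maxHeartbeats 4000000 in
lemma MBondq_charpoly :
    MBondq.charpoly = (X + 1) ^ 2 * (X - 1) ^ 3 * (X + C (1/3 : ℚ)) ^ 3 * X ^ 4 := by
  have hsub : MBz = Mz.submatrix bondEquiv bondEquiv := by decide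
  have hq : MBondq = Mq.submatrix bondEquiv bondEquiv := by
    ext b' b
    simp [MBondq, Mq, hsub, Matrix.submatrix_apply, Matrix.smul_apply, Matrix.map_apply]
  have hre : MBondq = Matrix.reindex bondEquiv.symm bondEquiv.symm Mq := by
    rw [hq]; simp [Matrix.reindex_apply]
  rw [hre, Matrix.charpoly_reindex, Mq_charpoly]

theorem K4_charpoly :
    K4BondMatrix.charpoly =
      (Polynomial.X + 1) ^ 2 * (Polynomial.X - 1) ^ 3 *
        (Polynomial.X + Polynomial.C (1/3 : ℂ)) ^ 3 * Polynomial.X ^ 4 ∧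
    K4BondMatrix.charpoly.roots.count (-1) = 2 ∧
    K4BondMatrix.charpoly.roots.count 1 = 3 ∧
    K4BondMatrix.charpoly.roots.count (-1/3) = 3 ∧
    K4BondMatrix.charpoly.roots.count 0 = 4 := by
  have hmain : K4BondMatrix.charpoly =
      (X + 1) ^ 2 * (X - 1) ^ 3 * (X + C (1/3 : ℂ)) ^ 3 * X ^ 4 := by
    rw [K4_eq_map, Matrix.charpoly_map, MBondq_charpoly]
    have h13 : ((1/3 : ℚ) : ℂ) = (1/3 : ℂ) := by norm_num
    simp [Polynomial.map_mul, Polynomial.map_pow, Polynomial.map_add, Polynomial.map_sub,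
      Polynomial.map_one, Polynomial.map_X, Polynomial.map_C, h13]
  refine ⟨hmain, ?_, ?_, ?_, ?_⟩ <;>
  · rw [hmain]
    have e1 : (X + 1 : ℂ[X]) = X - C (-1) := by simp
    have e2 : (X - 1 : ℂ[X]) = X - C 1 := by simp
    have e3 : (X + C (1/3 : ℂ)) = X - C (-1/3) := by
      rw [(by norm_num : (-1/3 : ℂ) = -(1/3)), _root_.map_neg]; ring
    have e4 : (X : ℂ[X]) = X - C 0 := by simp
    rw [e1, e2, e3]
    nth_rewrite 4 [e4]
    have h1 : (X - C (-1) : ℂ[X]) ≠ 0 := X_sub_C_ne_zero _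
    have h2 : (X - C (1:ℂ) : ℂ[X]) ≠ 0 := X_sub_C_ne_zero _
    have h3 : (X - C (-1/3 : ℂ) : ℂ[X]) ≠ 0 := X_sub_C_ne_zero _
    have h4 : (X - C (0:ℂ) : ℂ[X]) ≠ 0 := X_sub_C_ne_zero _
    rw [roots_mul (mul_ne_zero (mul_ne_zero (mul_ne_zero (pow_ne_zero _ h1)
        (pow_ne_zero _ h2)) (pow_ne_zero _ h3)) (pow_ne_zero _ h4)),
      roots_mul (mul_ne_zero (mul_ne_zero (pow_ne_zero _ h1) (pow_ne_zero _ h2))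
        (pow_ne_zero _ h3)),
      roots_mul (mul_ne_zero (pow_ne_zero _ h1) (pow_ne_zero _ h2)),
      roots_pow, roots_pow, roots_pow, roots_pow, roots_X_sub_C, roots_X_sub_C,
      roots_X_sub_C, roots_X_sub_C]
    simp only [Multiset.count_add, Multiset.count_nsmul, Multiset.count_singleton]
    norm_num
end
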